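/- Let G be a connected finite simple graph. Then ρ(G_π) = ρ(G) holds for every sign function π on G if and only if G is a tree (connected and acyclic) or G is an odd-unicyclic graph (connected, containing exactly one cycle, and that cycle has odd length; equivalently, connected with as many edges as vertices and non-bipartite). -/

import Mathlib

open Matrix Finset
open scoped Classical

noncomputable section

/-- `μ` is an eigenvalue of the real matrix `A`. -/
def IsEigenval {n : Type*} [Fintype n] (A : Matrix n n ℝ) (μ : ℝ) : Prop :=
  ∃ x : n → ℝ, x ≠ 0 ∧ A.mulVec x = μ • x

/-- The spectral radius of a real symmetric matrix:
the largest modulus of an eigenvalue. -/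
def specRad {n : Type*} [Fintype n] (A : Matrix n n ℝ) : ℝ :=
  sSup {r : ℝ | ∃ μ : ℝ, IsEigenval A μ ∧ r = |μ|}

/-- The spectral radius of a finite simple graph. -/
def grho {V : Type*} [Fintype V] [DecidableEq V] (G : SimpleGraph V) : ℝ :=
  letI := Classical.decRel G.Adj
  specRad (G.adjMatrix ℝ)

/-- max over edges of spectral radius of the edge-deleted graph -/
def rhoE {V : Type*} [Fintype V] [DecidableEq V] (G : SimpleGraph V) : ℝ :=
  sSup {r : ℝ | ∃ e ∈ G.edgeSet, r = grho (G.deleteEdges {e})}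

/-- Eigenpair of the k-power hypergraph G^(k). -/
def IsPowerEigenpair {V : Type*} [Fintype V] [DecidableEq V] (G : SimpleGraph V) (k : ℕ)
    (lam : ℂ) (x : (V ⊕ (G.edgeSet × Fin (k - 2))) → ℂ) : Prop :=
  x ≠ 0 ∧
    (∀ i : V, lam * x (Sum.inl i) ^ (k - 1) =
      ∑ j : V, if h : G.Adj i j then
        x (Sum.inl j) * ∏ t : Fin (k - 2), x (Sum.inr (⟨s(i, j), (G.mem_edgeSet).mpr h⟩, t))
      else 0) ∧
    ∀ (i j : V) (h : G.Adj i j) (t : Fin (k - 2)),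
      lam * x (Sum.inr (⟨s(i, j), (G.mem_edgeSet).mpr h⟩, t)) ^ (k - 1) =
        x (Sum.inl i) * x (Sum.inl j) *
          ∏ u ∈ Finset.univ.erase t, x (Sum.inr (⟨s(i, j), (G.mem_edgeSet).mpr h⟩, u))

/-- λ is an eigenvalue of G^(k). -/
def IsPowerEigenvalue {V : Type*} [Fintype V] [DecidableEq V] (G : SimpleGraph V) (k : ℕ)
    (lam : ℂ) : Prop :=
  ∃ x, IsPowerEigenpair G k lam x

/-- The adjacency matrix of a signed graph, sign function `π : G.edgeSet → ℤˣ`. -/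
def signedAdj {V : Type*} [Fintype V] [DecidableEq V] (G : SimpleGraph V)
    (π : G.edgeSet → ℤˣ) : Matrix V V ℝ :=
  Matrix.of fun i j => if h : G.Adj i j then ((π ⟨s(i, j), (G.mem_edgeSet).mpr h⟩ : ℤ) : ℝ) else 0

/-- Switching-equivalence of matrices. -/
def SwitchEquiv {V : Type*} [Fintype V] [DecidableEq V] (A B : Matrix V V ℝ) : Prop :=
  ∃ d : V → ℝ, (∀ i, d i = 1 ∨ d i = -1) ∧ B = Matrix.diagonal d * A * Matrix.diagonal d

/-- A signed graph is balanced if it is switching equivalent to the all-`+1` signing. -/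
def IsBalanced {V : Type*} [Fintype V] [DecidableEq V] (G : SimpleGraph V)
    (π : G.edgeSet → ℤˣ) : Prop :=
  SwitchEquiv (signedAdj G π) (signedAdj G fun _ => 1)

def IsBipartite {V : Type*} (G : SimpleGraph V) : Prop :=
  ∃ c : V → Bool, ∀ ⦃i j⦄, G.Adj i j → c i ≠ c j

end

/-!
Let `A₀` be the adjacency matrix of `G` and `ρ = ρ(A₀)`. If `A_π x = μ x` with `|μ| = ρ`, then
`ρ |x| ≤ A₀ |x|` entrywise, and since `ρ • 1 - A₀` is positive semidefinite this forces
`A₀ |x| = ρ |x|`. By connectivity `|x|` has no zero entry, and every triangle inequality in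
`|(A_π x)ᵢ| ≤ (A₀ |x|)ᵢ` is an equality, which gives `π(ij) = sgn μ · sgn xᵢ · sgn xⱼ`. Hence
`ρ(G_π) = ρ(G)` exactly when `π` is switching equivalent to `G` or to `-G`, that is, when some
`ε = ±1` gives every closed walk `c` the sign `ε ^ |c|`.

Every signing of a tree is switching equivalent to `G`. If `G` is a spanning tree plus one edge
`ab`, the sign of `ab` is matched either with `ε = 1` or, after multiplying the switching by the
bipartition of the tree, with `ε = -1`; the latter needs `a` and `b` on the same side, which is
where non-bipartiteness enters. Conversely, negating a single edge of a cycle shows that every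
cycle is odd and that an edge of one cycle lies on every cycle, so deleting it leaves a tree.
-/

theorem Finset.mul_sum_nonneg_of_abs_sum_eq {ι : Type*} {s : Finset ι} {f : ι → ℝ}
    (h : |∑ i ∈ s, f i| = ∑ i ∈ s, |f i|) {j : ι} (hj : j ∈ s) :
    0 ≤ f j * ∑ i ∈ s, f i := by
  set S := ∑ i ∈ s, f i
  have hgap : ∀ i, 0 ≤ |f i| * |S| - f i * S := fun i =>
    sub_nonneg.2 (abs_mul (f i) S ▸ le_abs_self _)
  have hsum : ∑ i ∈ s, (|f i| * |S| - f i * S) = 0 := by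
    rw [sum_sub_distrib, ← sum_mul, ← sum_mul, ← h, abs_mul_abs_self, sub_self]
  have hj0 := (sum_eq_zero_iff_of_nonneg fun i _ => hgap i).mp hsum j hj
  rw [sub_eq_zero] at hj0
  rw [← hj0]
  positivity

theorem Int.units_mul_mul_self_left (u v : ℤˣ) : u * (u * v) = v := by
  rw [← mul_assoc, Int.units_mul_self, one_mul]

theorem Int.units_eq_of_nonneg_mul {u v : ℤˣ} (h : 0 ≤ ((u : ℤ) : ℝ) * ((v : ℤ) : ℝ)) : u = v := by
  rcases Int.units_eq_one_or u with rfl | rfl <;> rcases Int.units_eq_one_or v with rfl | rfl <;>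
    first | rfl | norm_num at h

/-- The sign of `0` is taken to be `1`. -/
noncomputable def signUnit (a : ℝ) : ℤˣ := if 0 ≤ a then 1 else -1

theorem signUnit_mul_abs (a : ℝ) : ((signUnit a : ℤ) : ℝ) * |a| = a := by
  unfold signUnit
  split_ifs with h
  · simp [abs_of_nonneg h]
  · simp [abs_of_neg (not_le.mp h)]

namespace Matrix

variable {n : Type*} [Fintype n] {A B : Matrix n n ℝ}

theorem abs_mulVec_apply_le (hBA : ∀ i j, |B i j| = A i j) (x : n → ℝ) (i : n) :
    |(B *ᵥ x) i| ≤ (A *ᵥ |x|) i := by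
  simp only [mulVec, dotProduct, ← hBA, Pi.abs_apply, ← abs_mul]
  exact Finset.abs_sum_le_sum_abs _ _

theorem abs_sum_mul_eq_sum_abs_of_mulVec_abs_eq (hBA : ∀ i j, |B i j| = A i j) {μ : ℝ}
    {x : n → ℝ} (hx : B *ᵥ x = μ • x) (hAx : A *ᵥ |x| = |μ| • |x|) (i : n) :
    |∑ j, B i j * x j| = ∑ j, |B i j * x j| := by
  refine le_antisymm (Finset.abs_sum_le_sum_abs _ _) ?_
  have hA := congrFun hAx i
  have hB := congrFun hx i
  simp only [mulVec, dotProduct, Pi.smul_apply, smul_eq_mul, Pi.abs_apply] at hA hB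
  simp only [abs_mul, hBA, hA, hB, le_refl]

variable [DecidableEq n]

theorem isEigenval_iff_mem_spectrum {μ : ℝ} : IsEigenval A μ ↔ μ ∈ spectrum ℝ A := by
  rw [← spectrum_toLin', ← Module.End.hasEigenvalue_iff_mem_spectrum,
    Module.End.hasEigenvalue_iff, Submodule.ne_bot_iff]
  simp [IsEigenval, and_comm]

theorem specRad_eq_sSup_spectrum : specRad A = sSup ((|·|) '' spectrum ℝ A) := by
  simp [specRad, isEigenval_iff_mem_spectrum, Set.image, eq_comm]

theorem specRad_neg : specRad (-A) = specRad A := by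
  rw [specRad_eq_sSup_spectrum, specRad_eq_sSup_spectrum, ← spectrum.neg_eq,
    ← Set.image_neg_eq_neg, Set.image_image]
  simp

theorem specRad_units_conj (u : (Matrix n n ℝ)ˣ) : specRad (u.val * A * u⁻¹.val) = specRad A := by
  rw [specRad_eq_sSup_spectrum, specRad_eq_sSup_spectrum, spectrum.units_conjugate]

theorem specRad_diagonal_mul_mul_diagonal {d : n → ℝ} (hd : ∀ i, d i * d i = 1) :
    specRad (diagonal d * A * diagonal d) = specRad A := by
  have hdd : diagonal d * diagonal d = 1 := by
    rw [diagonal_mul_diagonal, ← diagonal_one]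
    exact congrArg diagonal (funext hd)
  exact specRad_units_conj ⟨diagonal d, diagonal d, hdd, hdd⟩

theorem _root_.IsEigenval.abs_le_specRad {μ : ℝ} (hμ : IsEigenval A μ) : |μ| ≤ specRad A := by
  rw [specRad_eq_sSup_spectrum]
  exact le_csSup (A.finite_real_spectrum.image _).bddAbove
    ⟨μ, isEigenval_iff_mem_spectrum.mp hμ, rfl⟩

theorem IsHermitian.exists_isEigenval_abs_eq_specRad [Nonempty n] (hA : A.IsHermitian) :
    ∃ μ, IsEigenval A μ ∧ |μ| = specRad A := by
  have hne : ((|·|) '' spectrum ℝ A).Nonempty := by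
    simp [hA.spectrum_real_eq_range_eigenvalues, Set.range_nonempty]
  obtain ⟨μ, hμ, h⟩ := hne.csSup_mem (A.finite_real_spectrum.image _)
  exact ⟨μ, isEigenval_iff_mem_spectrum.mpr hμ, h.trans specRad_eq_sSup_spectrum.symm⟩

theorem IsHermitian.posSemidef_specRad_smul_one_sub (hA : A.IsHermitian) :
    (specRad A • 1 - A).PosSemidef := by
  refine posSemidef_iff_isHermitian_and_spectrum_nonneg.mpr
    ⟨(isHermitian_one.smul (IsSelfAdjoint.all _)).sub hA, fun μ hμ => ?_⟩
  rw [← Algebra.algebraMap_eq_smul_one, ← spectrum.singleton_sub_eq] at hμ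
  obtain ⟨r, rfl, ν, hν, rfl⟩ := hμ
  simp only [Set.mem_ofPred_eq, sub_nonneg]
  exact (le_abs_self ν).trans (isEigenval_iff_mem_spectrum.mpr hν).abs_le_specRad

theorem IsHermitian.mulVec_eq_specRad_smul_of_le (hA : A.IsHermitian) {y : n → ℝ} (hy : 0 ≤ y)
    (h : specRad A • y ≤ A *ᵥ y) : A *ᵥ y = specRad A • y := by
  have hM := hA.posSemidef_specRad_smul_one_sub
  have hMy : (specRad A • 1 - A) *ᵥ y = specRad A • y - A *ᵥ y := by
    rw [sub_mulVec, smul_mulVec, one_mulVec]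
  have hle : y ⬝ᵥ (specRad A • 1 - A) *ᵥ y ≤ 0 := by
    rw [hMy]
    exact Finset.sum_nonpos fun i _ => mul_nonpos_of_nonneg_of_nonpos (hy i) (sub_nonpos.2 (h i))
  have hzero := (hM.dotProduct_mulVec_zero_iff y).mp
    (le_antisymm hle (by simpa using hM.dotProduct_mulVec_nonneg y))
  rw [hMy, sub_eq_zero] at hzero
  exact hzero.symm

theorem IsHermitian.mulVec_abs_eq_of_abs_eq_specRad (hA : A.IsHermitian)
    (hBA : ∀ i j, |B i j| = A i j) {μ : ℝ} {x : n → ℝ} (hx : B *ᵥ x = μ • x)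
    (hμ : |μ| = specRad A) : A *ᵥ |x| = specRad A • |x| :=
  hA.mulVec_eq_specRad_smul_of_le (abs_nonneg x) fun i => by
    simpa [hx, abs_mul, hμ] using abs_mulVec_apply_le hBA x i

end Matrix

namespace SimpleGraph

variable {V : Type*} {G : SimpleGraph V}

theorem Walk.IsCycle.exists_mem_edges {u : V} {c : G.Walk u u} (hc : c.IsCycle) :
    ∃ e, e ∈ c.edges :=
  List.exists_mem_of_ne_nil _ (mt Walk.edges_eq_nil.mp hc.not_nil)

variable [Fintype V]

theorem Connected.pos_of_adjMatrix_mulVec_eq [DecidableRel G.Adj] (hG : G.Connected)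
    {y : V → ℝ} {r : ℝ} (hy : 0 ≤ y) (hy0 : y ≠ 0) (h : G.adjMatrix ℝ *ᵥ y = r • y) (v : V) :
    0 < y v := by
  have hadj : ∀ ⦃i j⦄, G.Adj i j → y i = 0 → y j = 0 := fun i j hij hi => by
    have hsum := congrFun h i
    rw [adjMatrix_mulVec_apply, Pi.smul_apply, hi, smul_zero] at hsum
    exact (Finset.sum_eq_zero_iff_of_nonneg fun k _ => hy k).mp hsum j (by simpa using hij)
  have hwalk : ∀ {u w : V} (p : G.Walk u w), y u = 0 → y w = 0 := by
    intro u w p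
    induction p with
    | nil => exact id
    | cons hij _ ih => exact fun hu => ih (hadj hij hu)
  obtain ⟨u, hu⟩ := Function.ne_iff.mp hy0
  exact (hy v).lt_of_ne fun hv => hu (hwalk (hG.preconnected v u).some hv.symm)

theorem Connected.exists_isTree_le_of_ncard_edgeSet_eq (hG : G.Connected)
    (hcard : G.edgeSet.ncard = Fintype.card V) :
    ∃ T ≤ G, T.IsTree ∧ ∃ a b, G.Adj a b ∧ ∀ ⦃i j⦄, G.Adj i j → T.Adj i j ∨ s(i, j) = s(a, b) := by
  obtain ⟨T, hle, hT⟩ := hG.exists_isTree_le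
  have hTcard := (isTree_iff_connected_and_card.mp hT).2
  rw [Nat.card_coe_set_eq, Nat.card_eq_fintype_card] at hTcard
  have hdiff : (G.edgeSet \ T.edgeSet).ncard = 1 := by
    rw [Set.ncard_sdiff (edgeSet_mono hle)]
    omega
  obtain ⟨e, he⟩ := Set.ncard_eq_one.mp hdiff
  induction e using Sym2.ind with
  | h a b =>
    have hab : s(a, b) ∈ G.edgeSet \ T.edgeSet := he ▸ Set.mem_singleton _
    refine ⟨T, hle, hT, a, b, hab.1, fun i j hij => ?_⟩
    by_contra! hne
    have : s(i, j) ∈ G.edgeSet \ T.edgeSet := ⟨hij, hne.1⟩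
    exact hne.2 (by simpa [he] using this)

end SimpleGraph

section Bipartite

variable {V : Type*} {G : SimpleGraph V}

theorem IsBipartite.even_length (hG : IsBipartite G) {u : V} (p : G.Walk u u) : Even p.length :=
  let ⟨c, hc⟩ := hG
  ((SimpleGraph.Coloring.mk c fun h => hc h).even_length_iff_congr p).mpr Iff.rfl

theorem isBipartite_of_mul_eq_neg_one (c : V → ℤˣ) (hc : ∀ ⦃i j⦄, G.Adj i j → c i * c j = -1) :
    IsBipartite G := by
  have key : ∀ x y : ℤˣ, x * y = -1 → decide (x = 1) ≠ decide (y = 1) := by decide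
  exact ⟨fun v => decide (c v = 1), fun i j h => key _ _ (hc h)⟩

end Bipartite

section Switching

variable {V : Type*} {G : SimpleGraph V}

theorem apply_edge_swap (π : G.edgeSet → ℤˣ) {i j : V} (h : G.Adj i j) :
    π ⟨s(j, i), G.mem_edgeSet.2 h.symm⟩ = π ⟨s(i, j), G.mem_edgeSet.2 h⟩ :=
  congrArg π (Subtype.ext Sym2.eq_swap)

/-- Switching `π` at the vertices where `d = -1` gives `G` if `ε = 1` and `-G` if `ε = -1`. -/
def SwitchesToConst (d : V → ℤˣ) (π : G.edgeSet → ℤˣ) (ε : ℤˣ) : Prop :=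
  ∀ ⦃i j⦄ (h : G.Adj i j), π ⟨s(i, j), G.mem_edgeSet.2 h⟩ = ε * d i * d j

variable [Fintype V] [DecidableEq V]

theorem signedAdj_isHermitian (π : G.edgeSet → ℤˣ) : (signedAdj G π).IsHermitian := by
  ext i j
  simp only [conjTranspose_apply, star_trivial, signedAdj, of_apply, G.adj_comm j i]
  split_ifs with h
  · rw [apply_edge_swap π h]
  · rfl

theorem abs_signedAdj [DecidableRel G.Adj] (π : G.edgeSet → ℤˣ) (i j : V) :
    |signedAdj G π i j| = G.adjMatrix ℝ i j := by
  by_cases h : G.Adj i j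
  · rcases Int.units_eq_one_or (π ⟨s(i, j), h⟩) with hπ | hπ <;> simp [signedAdj, h, hπ]
  · simp [signedAdj, h]

theorem SwitchesToConst.signedAdj_eq [DecidableRel G.Adj] {d : V → ℤˣ} {π : G.edgeSet → ℤˣ}
    {ε : ℤˣ} (h : SwitchesToConst d π ε) :
    signedAdj G π = ((ε : ℤ) : ℝ) •
      (diagonal (fun v => ((d v : ℤ) : ℝ)) * G.adjMatrix ℝ * diagonal fun v => ((d v : ℤ) : ℝ)) := by
  ext i j
  rw [Matrix.smul_apply, mul_diagonal, diagonal_mul]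
  by_cases hij : G.Adj i j
  · simp [signedAdj, hij, h hij]
    ring
  · simp [signedAdj, hij]

theorem SwitchesToConst.specRad_signedAdj {d : V → ℤˣ} {π : G.edgeSet → ℤˣ} {ε : ℤˣ}
    (h : SwitchesToConst d π ε) : specRad (signedAdj G π) = grho G := by
  have hd : ∀ v, ((d v : ℤ) : ℝ) * ((d v : ℤ) : ℝ) = 1 := fun v => by
    rcases Int.units_eq_one_or (d v) with h | h <;> simp [h]
  rw [grho, h.signedAdj_eq]
  rcases Int.units_eq_one_or ε with rfl | rfl
  · simp [specRad_diagonal_mul_mul_diagonal hd]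
  · simp [specRad_neg, specRad_diagonal_mul_mul_diagonal hd]

theorem exists_switchesToConst_of_specRad_eq (hG : G.Connected) {π : G.edgeSet → ℤˣ}
    (h : specRad (signedAdj G π) = grho G) : ∃ d ε, SwitchesToConst d π ε := by
  have := hG.nonempty
  obtain ⟨μ, ⟨x, hx0, hx⟩, hμ⟩ := (signedAdj_isHermitian π).exists_isEigenval_abs_eq_specRad
  rw [h, grho] at hμ
  have hBA := abs_signedAdj (G := G) π
  have hAx := (G.isHermitian_adjMatrix ℝ).mulVec_abs_eq_of_abs_eq_specRad hBA hx hμ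
  have hpos : ∀ v, 0 < |x v| := hG.pos_of_adjMatrix_mulVec_eq (abs_nonneg x)
    (fun h0 => hx0 (funext fun v => abs_eq_zero.mp (congrFun h0 v))) hAx
  rw [← hμ] at hAx
  refine ⟨fun v => signUnit (x v), signUnit μ, fun i j hij => ?_⟩
  have hμ0 : 0 < |μ| := by
    have hi := congrFun hAx i
    rw [SimpleGraph.adjMatrix_mulVec_apply, Pi.smul_apply, smul_eq_mul] at hi
    have hj : |x j| ≤ ∑ k ∈ G.neighborFinset i, |x k| :=
      Finset.single_le_sum (fun k _ => (hpos k).le) (by simpa using hij)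
    exact pos_of_mul_pos_left (hi ▸ (hpos j).trans_le hj) (hpos i).le
  -- equality in the triangle inequality for row `i`: `π(ij) xⱼ` has the sign of `μ xᵢ`
  have hsame := Finset.mul_sum_nonneg_of_abs_sum_eq
    (abs_sum_mul_eq_sum_abs_of_mulVec_abs_eq hBA hx hAx i) (Finset.mem_univ j)
  rw [show ∑ k, signedAdj G π i k * x k = μ * x i from congrFun hx i] at hsame
  simp only [signedAdj, of_apply, dif_pos hij] at hsame
  have key : 0 ≤ ((π ⟨s(i, j), G.mem_edgeSet.2 hij⟩ : ℤ) : ℝ) *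
      ((signUnit μ * signUnit (x i) * signUnit (x j) : ℤˣ) : ℤ) * (|x j| * |μ| * |x i|) := by
    convert hsame using 1
    conv_rhs => rw [← signUnit_mul_abs (x j), ← signUnit_mul_abs μ, ← signUnit_mul_abs (x i)]
    push_cast
    ring
  exact Int.units_eq_of_nonneg_mul
    ((mul_nonneg_iff_of_pos_right (mul_pos (mul_pos (hpos j) hμ0) (hpos i))).mp key)

theorem specRad_signedAdj_eq_grho_iff (hG : G.Connected) (π : G.edgeSet → ℤˣ) :
    specRad (signedAdj G π) = grho G ↔ ∃ d ε, SwitchesToConst d π ε :=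
  ⟨exists_switchesToConst_of_specRad_eq hG, fun ⟨_, _, h⟩ => h.specRad_signedAdj⟩

end Switching

section WalkSign

open SimpleGraph

variable {V : Type*} {G : SimpleGraph V}

def walkSign (π : G.edgeSet → ℤˣ) {u v : V} (p : G.Walk u v) : ℤˣ :=
  (p.darts.map fun d => π ⟨d.edge, d.edge_mem⟩).prod

@[simp]
theorem walkSign_nil (π : G.edgeSet → ℤˣ) {u : V} : walkSign π (Walk.nil : G.Walk u u) = 1 := rfl

@[simp]
theorem walkSign_cons (π : G.edgeSet → ℤˣ) {u v w : V} (h : G.Adj u v) (p : G.Walk v w) :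
    walkSign π (p.cons h) = π ⟨s(u, v), G.mem_edgeSet.2 h⟩ * walkSign π p := by
  simp [walkSign]

theorem walkSign_concat (π : G.edgeSet → ℤˣ) {u v w : V} (p : G.Walk u v) (h : G.Adj v w) :
    walkSign π (p.concat h) = walkSign π p * π ⟨s(v, w), G.mem_edgeSet.2 h⟩ := by
  simp [walkSign, Walk.darts_concat]

theorem SwitchesToConst.walkSign_eq {d : V → ℤˣ} {π : G.edgeSet → ℤˣ} {ε : ℤˣ}
    (h : SwitchesToConst d π ε) {u v : V} (p : G.Walk u v) :
    walkSign π p = ε ^ p.length * d u * d v := by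
  induction p with
  | nil => simp
  | @cons u v w hadj p ih =>
    rw [walkSign_cons, ih, h hadj, Walk.length_cons, pow_succ,
      show ε * d u * d v * (ε ^ p.length * d v * d w) = ε ^ p.length * ε * d u * d w * (d v * d v)
        by ac_rfl, Int.units_mul_self, mul_one]

def flipAt [DecidableEq V] (e : Sym2 V) : G.edgeSet → ℤˣ :=
  fun f => if (f : Sym2 V) = e then -1 else 1

theorem walkSign_flipAt [DecidableEq V] (e : Sym2 V) {u v : V} {p : G.Walk u v}
    (hp : p.IsTrail) : walkSign (flipAt e) p = if e ∈ p.edges then -1 else 1 := by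
  induction p with
  | nil => simp
  | @cons u v w hadj p ih =>
    rw [Walk.isTrail_cons] at hp
    rw [walkSign_cons, ih hp.1]
    by_cases he : s(u, v) = e
    · subst he
      simp [flipAt, hp.2]
    · simp [flipAt, he, Ne.symm he]

theorem SimpleGraph.IsTree.exists_switchesToConst {T : SimpleGraph V} (hT : T.IsTree)
    (π : T.edgeSet → ℤˣ) (ε : ℤˣ) : ∃ d, SwitchesToConst d π ε := by
  obtain ⟨r⟩ := hT.connected.nonempty
  choose P hP _ using hT.existsUnique_path r
  refine ⟨fun v => walkSign (fun e => ε * π e) (P v), fun i j hij => ?_⟩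
  dsimp only
  by_cases hi : i ∈ (P j).support
  · rw [hT.isAcyclic.path_concat (hP i) (hP j) hij hi, walkSign_concat]
    simp [mul_comm, mul_left_comm, Int.units_mul_mul_self_left]
  · have hj := hT.isAcyclic.mem_support_of_ne_mem_support_of_adj_of_isPath (hP i) (hP j) hij hi
    rw [hT.isAcyclic.path_concat (hP j) (hP i) hij.symm hj, walkSign_concat,
      apply_edge_swap (fun e => ε * π e) hij]
    simp [mul_comm, mul_left_comm, Int.units_mul_mul_self_left]

theorem SwitchesToConst.of_restrict {T : SimpleGraph V} (hle : T ≤ G) {d : V → ℤˣ}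
    {π : G.edgeSet → ℤˣ} {ε : ℤˣ}
    (hT : SwitchesToConst d (π ∘ Set.inclusion (edgeSet_mono hle)) ε) {a b : V} (hab : G.Adj a b)
    (hπab : π ⟨s(a, b), G.mem_edgeSet.2 hab⟩ = ε * d a * d b)
    (hedge : ∀ ⦃i j⦄, G.Adj i j → T.Adj i j ∨ s(i, j) = s(a, b)) :
    SwitchesToConst d π ε := by
  intro i j hij
  rcases hedge hij with hT' | he
  · exact hT hT'
  · rcases Sym2.eq_iff.mp he with ⟨rfl, rfl⟩ | ⟨rfl, rfl⟩
    · exact hπab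
    · rw [apply_edge_swap π hij.symm, hπab, mul_right_comm]

theorem exists_switchesToConst_of_not_isBipartite [Fintype V] (hG : G.Connected)
    (hcard : G.edgeSet.ncard = Fintype.card V) (hbip : ¬_root_.IsBipartite G)
    (π : G.edgeSet → ℤˣ) : ∃ d ε, SwitchesToConst d π ε := by
  obtain ⟨T, hle, hT, a, b, hab, hedge⟩ := hG.exists_isTree_le_of_ncard_edgeSet_eq hcard
  obtain ⟨d₁, h₁⟩ := hT.exists_switchesToConst (π ∘ Set.inclusion (edgeSet_mono hle)) 1
  obtain ⟨d₂, h₂⟩ := hT.exists_switchesToConst (π ∘ Set.inclusion (edgeSet_mono hle)) (-1)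
  have hcol : ∀ ⦃i j⦄, T.Adj i j → d₁ i * d₂ i * (d₁ j * d₂ j) = -1 := fun i j hij => by
    have key : ∀ x y z w : ℤˣ, 1 * x * z = -1 * y * w → x * y * (z * w) = -1 := by decide
    exact key _ _ _ _ ((h₁ hij).symm.trans (h₂ hij))
  have hcab : d₁ a * d₂ a * (d₁ b * d₂ b) = 1 := by
    by_contra hne
    refine hbip (isBipartite_of_mul_eq_neg_one (fun v => d₁ v * d₂ v) fun i j hij => ?_)
    rcases hedge hij with hT' | he
    · exact hcol hT'
    · rcases Sym2.eq_iff.mp he with ⟨rfl, rfl⟩ | ⟨rfl, rfl⟩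
      · exact (Int.units_eq_one_or _).resolve_left hne
      · rw [mul_comm]
        exact (Int.units_eq_one_or _).resolve_left hne
  rcases Int.units_eq_one_or (π ⟨s(a, b), G.mem_edgeSet.2 hab⟩ * (d₁ a * d₁ b)) with h | h
  · have key : ∀ p x y : ℤˣ, p * (x * y) = 1 → p = 1 * x * y := by decide
    exact ⟨d₁, 1, h₁.of_restrict hle hab (key _ _ _ h) hedge⟩
  · have key : ∀ p x y z w : ℤˣ, p * (x * z) = -1 → x * y * (z * w) = 1 → p = -1 * y * w := by
      decide
    exact ⟨d₂, -1, h₂.of_restrict hle hab (key _ _ _ _ _ h hcab) hedge⟩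

end WalkSign

section Cycles

open SimpleGraph

variable {V : Type*} [DecidableEq V] {G : SimpleGraph V}

theorem SwitchesToConst.pow_length_eq {d : V → ℤˣ} {e : Sym2 V} {ε : ℤˣ}
    (h : SwitchesToConst d (flipAt (G := G) e) ε) {u : V} {c : G.Walk u u} (hc : c.IsTrail) :
    ε ^ c.length = if e ∈ c.edges then -1 else 1 := by
  rw [← walkSign_flipAt e hc, h.walkSign_eq, mul_assoc, Int.units_mul_self, mul_one]

def AllSigningsSwitchToConst (G : SimpleGraph V) : Prop :=
  ∀ π : G.edgeSet → ℤˣ, ∃ d ε, SwitchesToConst d π ε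

namespace AllSigningsSwitchToConst

variable (hG : AllSigningsSwitchToConst G)
include hG

theorem odd_length {u : V} {c : G.Walk u u} (hc : c.IsCycle) : Odd c.length := by
  obtain ⟨e, he⟩ := hc.exists_mem_edges
  obtain ⟨d, ε, h⟩ := hG (flipAt e)
  have hpow := h.pow_length_eq hc.isTrail
  rw [if_pos he, Int.units_pow_eq_pow_mod_two] at hpow
  rcases Nat.mod_two_eq_zero_or_one c.length with h2 | h2
  · rw [h2, pow_zero] at hpow
    exact absurd hpow (by decide)
  · exact Nat.odd_iff.mpr h2

theorem mem_edges {u w : V} {c₁ : G.Walk u u} {c₂ : G.Walk w w} (hc₁ : c₁.IsCycle)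
    (hc₂ : c₂.IsCycle) {e : Sym2 V} (he : e ∈ c₁.edges) : e ∈ c₂.edges := by
  by_contra he₂
  obtain ⟨d, ε, h⟩ := hG (flipAt e)
  have h₁ := h.pow_length_eq hc₁.isTrail
  have h₂ := h.pow_length_eq hc₂.isTrail
  rw [if_pos he, Int.units_pow_eq_pow_mod_two, Nat.odd_iff.mp (hG.odd_length hc₁)] at h₁
  rw [if_neg he₂, Int.units_pow_eq_pow_mod_two, Nat.odd_iff.mp (hG.odd_length hc₂)] at h₂
  exact absurd (h₁.symm.trans h₂) (by decide)

theorem isTree_deleteEdges (hconn : G.Connected) {u : V} {c : G.Walk u u} (hc : c.IsCycle)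
    {e : Sym2 V} (he : e ∈ c.edges) : (G.deleteEdges {e}).IsTree := by
  induction e using Sym2.ind with
  | h x y =>
    refine ⟨hconn.connected_delete_edge_of_not_isBridge fun hb => hb.notMem_edges_of_isCycle hc he,
      fun w c₂ hc₂ => ?_⟩
    have := hG.mem_edges hc (hc₂.mapLe (G.deleteEdges_le _)) he
    rw [Walk.edges_mapLe_eq_edges] at this
    simpa using c₂.edges_subset_edgeSet this

theorem isTree_or [Fintype V] (hconn : G.Connected) :
    G.IsTree ∨ (G.edgeSet.ncard = Fintype.card V ∧ ¬_root_.IsBipartite G) := by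
  by_cases hac : G.IsAcyclic
  · exact Or.inl ⟨hconn, hac⟩
  obtain ⟨u, c, hc⟩ : ∃ u, ∃ c : G.Walk u u, c.IsCycle := by simpa [IsAcyclic] using hac
  obtain ⟨e, he⟩ := hc.exists_mem_edges
  have heG := c.edges_subset_edgeSet he
  have hcard := (isTree_iff_connected_and_card.mp (hG.isTree_deleteEdges hconn hc he)).2
  rw [Nat.card_coe_set_eq, Nat.card_eq_fintype_card, edgeSet_deleteEdges,
    Set.ncard_sdiff_singleton_of_mem heG] at hcard
  have hpos : 0 < G.edgeSet.ncard := (Set.ncard_pos (Set.toFinite _)).mpr ⟨e, heG⟩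
  exact Or.inr ⟨by omega, fun hb => Nat.not_even_iff_odd.mpr (hG.odd_length hc)
    (hb.even_length c)⟩

end AllSigningsSwitchToConst

end Cycles

theorem allSigningsSwitchToConst_iff {V : Type*} [Fintype V] [DecidableEq V]
    {G : SimpleGraph V} (hG : G.Connected) :
    AllSigningsSwitchToConst G ↔
      G.IsTree ∨ (G.edgeSet.ncard = Fintype.card V ∧ ¬IsBipartite G) := by
  refine ⟨fun hall => hall.isTree_or hG, ?_⟩
  rintro (hT | ⟨hcard, hbip⟩) π
  · exact ⟨_, 1, (hT.exists_switchesToConst π 1).choose_spec⟩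
  · exact exists_switchesToConst_of_not_isBipartite hG hcard hbip π

/-- For a connected graph `G`, every signing `G_π` has `ρ(G_π) = ρ(G)` iff
`G` is a tree or an odd-unicyclic graph (as many edges as vertices and non-bipartite). -/
theorem all_signings_same_specRad_iff
    {V : Type*} [Fintype V] [DecidableEq V] (G : SimpleGraph V)
    (hG : G.Connected) :
    (∀ π : G.edgeSet → ℤˣ, specRad (signedAdj G π) = grho G) ↔
      (G.IsTree ∨ (G.edgeSet.ncard = Fintype.card V ∧ ¬ IsBipartite G)) := by
  simp_rw [specRad_signedAdj_eq_grho_iff hG]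
  exact allSigningsSwitchToConst_iff hG
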